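/- arXiv:1709.05572 — 2 statements merged into one kernel-verified Lean document; each statement's English description precedes it below -/
import Mathlib

section
/- Let D : [0,1] × [0,∞) → ℝ be such that for each t ≥ 0 the map r ↦ D(r,t) is twice continuously differentiable, and suppose there are constants m > 0, M ≥ 0, D_m ≥ 0 with D(r,t) ≥ m, |∂²D/∂r²(r,t)| ≤ M, and max{0, −(D(1,t) + ∂D/∂r(1,t))/2} ≤ D_m for all r ∈ [0,1], t ≥ 0. Let μ ∈ ℝ satisfy μ < −(M/2 + D_m²/m). Then every classical solution w (C² in r, C¹ in t, with w, ∂w/∂r, ∂²w/∂r², ∂w/∂t jointly continuous on [0,1]×[0,∞)) of the target system satisfies, for all t ≥ 0, ∫₀¹ w(r,t)² dr ≤ exp(2(μ + M/2 + D_m²/m) t) · ∫₀¹ w(r,0)² dr; in particular, since the exponent 2(μ + M/2 + D_m²/m) is negative, the origin w ≡ 0 is exponentially stable in the L²(0,1)-norm. -/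
/-!
The energy `V t = ∫₀¹ w(r,t)² dr` has derivative `∫₀¹ 2 w (D w_rr + μ w) dr`. Integrating
`2 D w w_rr` by parts twice and using `w(0,t) = 0` and `w_r(1,t) = -w(1,t)/2` leaves the boundary
term `-(D + D_r)(1,t) w(1,t)² ≤ 2 D_m w(1,t)² = 4 D_m ∫₀¹ w w_r`, the term `∫ D_rr w² ≤ M V` and the
dissipation `-2 ∫ D w_r² ≤ -2m ∫ w_r²`; Young's inequality absorbs the boundary term into the
dissipation at the price of `2 D_m²/m · V`. Hence `V' ≤ 2(μ + M/2 + D_m²/m) V`, and the bound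
follows by comparison with the exponential.
-/

open MeasureTheory intervalIntegral Set Real

open Function Filter Topology

section ParametricIntegral

variable {f f' : ℝ → ℝ → ℝ} {a b : ℝ} {s : Set ℝ}

lemma aestronglyMeasurable_uIoc_of_continuousOn_Icc {g : ℝ → ℝ} (hab : a ≤ b)
    (hg : ContinuousOn g (Icc a b)) : AEStronglyMeasurable g (volume.restrict (uIoc a b)) := by
  refine (hg.mono ?_).aestronglyMeasurable measurableSet_uIoc
  rw [uIoc_of_le hab]
  exact Ioc_subset_Icc_self

lemma continuousOn_parametric_intervalIntegral_of_continuousOn (hab : a ≤ b) (hs : IsCompact s)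
    (hf : ContinuousOn (uncurry f) (Icc a b ×ˢ s)) :
    ContinuousOn (fun t => ∫ r in a..b, f r t) s := by
  intro t ht
  obtain ⟨C, hC⟩ := (isCompact_Icc.prod hs).exists_bound_of_continuousOn hf
  have hIoc : uIoc a b ⊆ Icc a b := by rw [uIoc_of_le hab]; exact Ioc_subset_Icc_self
  refine continuousWithinAt_of_dominated_interval (bound := fun _ => C) ?_ ?_
    intervalIntegrable_const ?_
  · filter_upwards [self_mem_nhdsWithin] with τ hτ
    exact aestronglyMeasurable_uIoc_of_continuousOn_Icc hab (hf.uncurry_right τ hτ)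
  · filter_upwards [self_mem_nhdsWithin] with τ hτ
    exact .of_forall fun r hr => hC (r, τ) ⟨hIoc hr, hτ⟩
  · exact .of_forall fun r hr => hf.uncurry_left r (hIoc hr) t ht

lemma hasDerivAt_parametric_intervalIntegral_of_continuousOn {t₀ : ℝ} (hab : a ≤ b)
    (hs : s ∈ 𝓝 t₀) (hsc : IsCompact s) (hf : ContinuousOn (uncurry f) (Icc a b ×ˢ s))
    (hf' : ContinuousOn (uncurry f') (Icc a b ×ˢ s))
    (hderiv : ∀ r ∈ Icc a b, ∀ t ∈ s, HasDerivAt (f r) (f' r t) t) :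
    HasDerivAt (fun t => ∫ r in a..b, f r t) (∫ r in a..b, f' r t₀) t₀ := by
  obtain ⟨C, hC⟩ := (isCompact_Icc.prod hsc).exists_bound_of_continuousOn hf'
  have hIoc : uIoc a b ⊆ Icc a b := by rw [uIoc_of_le hab]; exact Ioc_subset_Icc_self
  have ht₀ : t₀ ∈ s := mem_of_mem_nhds hs
  refine (hasDerivAt_integral_of_dominated_loc_of_deriv_le (F := fun t r => f r t)
    (F' := fun t r => f' r t) (bound := fun _ => C) hs ?_
    ((hf.uncurry_right t₀ ht₀).intervalIntegrable_of_Icc hab)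
    (aestronglyMeasurable_uIoc_of_continuousOn_Icc hab (hf'.uncurry_right t₀ ht₀)) ?_
    intervalIntegrable_const ?_).2
  · filter_upwards [hs] with τ hτ
    exact aestronglyMeasurable_uIoc_of_continuousOn_Icc hab (hf.uncurry_right τ hτ)
  · exact .of_forall fun r hr τ hτ => hC (r, τ) ⟨hIoc hr, hτ⟩
  · exact .of_forall fun r hr τ hτ => hderiv r (hIoc hr) τ hτ

end ParametricIntegral

lemma integral_eq_sub_of_hasDerivWithinAt_Icc {f f' : ℝ → ℝ} {a b : ℝ} (hab : a ≤ b)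
    (hf : ∀ x ∈ Icc a b, HasDerivWithinAt f (f' x) (Icc a b) x)
    (hf' : ContinuousOn f' (Icc a b)) : ∫ x in a..b, f' x = f b - f a :=
  integral_eq_sub_of_hasDerivAt_of_le hab (HasDerivWithinAt.continuousOn hf)
    (fun x hx => (hf x (Ioo_subset_Icc_self hx)).hasDerivAt (Icc_mem_nhds hx.1 hx.2))
    (hf'.intervalIntegrable_of_Icc hab)

lemma le_exp_mul_of_hasDerivAt_le_mul {V V' : ℝ → ℝ} {K a b : ℝ} (hab : a ≤ b)
    (hV : ContinuousOn V (Icc a b)) (hV' : ∀ t ∈ Ioo a b, HasDerivAt V (V' t) t)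
    (hle : ∀ t ∈ Ioo a b, V' t ≤ K * V t) : V b ≤ exp (K * (b - a)) * V a := by
  set G : ℝ → ℝ := fun t => exp (-(K * (t - a))) * V t
  have hG' : ∀ t ∈ Ioo a b,
      HasDerivAt G (exp (-(K * (t - a))) * (V' t - K * V t)) t := by
    intro t ht
    have hexp : HasDerivAt (fun t => exp (-(K * (t - a)))) (exp (-(K * (t - a))) * -K) t := by
      simpa using (((hasDerivAt_id t).sub_const a).const_mul K).neg.exp
    exact (hexp.mul (hV' t ht)).congr_deriv (by ring)
  have hanti : AntitoneOn G (Icc a b) := by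
    refine antitoneOn_of_deriv_nonpos (convex_Icc a b)
      ((continuousOn_const.mul (continuousOn_id.sub continuousOn_const)).neg.rexp.mul hV)
      ?_ ?_ <;> rw [interior_Icc]
    · exact fun t ht => (hG' t ht).differentiableAt.differentiableWithinAt
    · intro t ht
      rw [(hG' t ht).deriv]
      exact mul_nonpos_of_nonneg_of_nonpos (exp_pos _).le (sub_nonpos.2 (hle t ht))
  have hGb : G b ≤ V a := by
    simpa [G] using hanti (left_mem_Icc.2 hab) (right_mem_Icc.2 hab) hab
  calc V b = exp (K * (b - a)) * G b := by
        simp only [G, ← mul_assoc, ← exp_add, add_neg_cancel, exp_zero, one_mul]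
    _ ≤ exp (K * (b - a)) * V a := by gcongr

lemma integral_mul_diffusion_le {D Dr Drr w wr wrr : ℝ → ℝ} {m M Dm μ : ℝ} (hm : 0 < m)
    (hD : ∀ r ∈ Icc (0:ℝ) 1, HasDerivWithinAt D (Dr r) (Icc 0 1) r)
    (hDr : ∀ r ∈ Icc (0:ℝ) 1, HasDerivWithinAt Dr (Drr r) (Icc 0 1) r)
    (hw : ∀ r ∈ Icc (0:ℝ) 1, HasDerivWithinAt w (wr r) (Icc 0 1) r)
    (hwr : ∀ r ∈ Icc (0:ℝ) 1, HasDerivWithinAt wr (wrr r) (Icc 0 1) r)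
    (hDrr_cont : ContinuousOn Drr (Icc 0 1)) (hwrr_cont : ContinuousOn wrr (Icc 0 1))
    (hD_ge : ∀ r ∈ Icc (0:ℝ) 1, m ≤ D r) (hDrr_le : ∀ r ∈ Icc (0:ℝ) 1, Drr r ≤ M)
    (hDm : -((D 1 + Dr 1) / 2) ≤ Dm) (hw0 : w 0 = 0) (hwr1 : wr 1 = -(1/2) * w 1) :
    ∫ r in (0:ℝ)..1, 2 * w r * (D r * wrr r + μ * w r) ≤
      (2 * μ + M + 2 * Dm ^ 2 / m) * ∫ r in (0:ℝ)..1, w r ^ 2 := by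
  set K := 2 * μ + M + 2 * Dm ^ 2 / m
  have cD := HasDerivWithinAt.continuousOn hD
  have cDr := HasDerivWithinAt.continuousOn hDr
  have cw := HasDerivWithinAt.continuousOn hw
  have cwr := HasDerivWithinAt.continuousOn hwr
  -- `2 w D wrr - P'` is a quadratic form in `(w, wr)` bounded by `(M + 2 Dm²/m) w²` (Young),
  -- and the Robin condition makes the boundary term `P 1` nonpositive
  set P : ℝ → ℝ := fun r => 2 * D r * w r * wr r - Dr r * w r ^ 2 - 2 * Dm * w r ^ 2
  set P' : ℝ → ℝ := fun r => 2 * D r * wr r ^ 2 + 2 * D r * w r * wrr r - Drr r * w r ^ 2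
    - 4 * Dm * w r * wr r
  have hP : ∀ r ∈ Icc (0:ℝ) 1, HasDerivWithinAt P (P' r) (Icc 0 1) r := fun r hr =>
    (((((hD r hr).const_mul 2).fun_mul (hw r hr)).fun_mul (hwr r hr)).fun_sub
      ((hDr r hr).fun_mul ((hw r hr).fun_pow 2)) |>.fun_sub
      (((hw r hr).fun_pow 2).const_mul (2 * Dm))).congr_deriv (by simp only [P']; ring)
  have hP'_cont : ContinuousOn P' (Icc 0 1) := by
    simp only [P']; fun_prop
  have hpt : ∀ r ∈ Icc (0:ℝ) 1, 2 * w r * (D r * wrr r + μ * w r) ≤ P' r + K * w r ^ 2 := by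
    intro r hr
    have young : 0 ≤ 2 * m * wr r ^ 2 - 4 * Dm * w r * wr r + 2 * Dm ^ 2 / m * w r ^ 2 := by
      have : 2 * m * wr r ^ 2 - 4 * Dm * w r * wr r + 2 * Dm ^ 2 / m * w r ^ 2
          = 2 / m * (m * wr r - Dm * w r) ^ 2 := by
        field_simp; ring
      rw [this]; positivity
    nlinarith [mul_le_mul_of_nonneg_right (hD_ge r hr) (sq_nonneg (wr r)),
      mul_le_mul_of_nonneg_right (hDrr_le r hr) (sq_nonneg (w r))]
  have hP1 : P 1 ≤ 0 := by
    have : P 1 = 2 * (-((D 1 + Dr 1) / 2) - Dm) * w 1 ^ 2 := by simp only [P, hwr1]; ring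
    rw [this]
    exact mul_nonpos_of_nonpos_of_nonneg (by linarith) (sq_nonneg _)
  have hP0 : P 0 = 0 := by simp [P, hw0]
  have hP'_int : IntervalIntegrable P' volume 0 1 := hP'_cont.intervalIntegrable_of_Icc zero_le_one
  have hKw_int : IntervalIntegrable (fun r => K * w r ^ 2) volume 0 1 :=
    ((cw.fun_pow 2).const_mul K).intervalIntegrable_of_Icc zero_le_one
  calc ∫ r in (0:ℝ)..1, 2 * w r * (D r * wrr r + μ * w r)
      ≤ ∫ r in (0:ℝ)..1, P' r + K * w r ^ 2 :=
        integral_mono_on zero_le_one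
          (by apply ContinuousOn.intervalIntegrable_of_Icc zero_le_one; fun_prop)
          (hP'_int.add hKw_int) hpt
    _ = P 1 - P 0 + K * ∫ r in (0:ℝ)..1, w r ^ 2 := by
        rw [integral_add hP'_int hKw_int,
          integral_eq_sub_of_hasDerivWithinAt_Icc zero_le_one hP hP'_cont,
          intervalIntegral.integral_const_mul]
    _ ≤ K * ∫ r in (0:ℝ)..1, w r ^ 2 := by linarith

theorem target_system_L2_exponential_stability_general
    (D Dr Drr : ℝ → ℝ → ℝ)
    (w wr wrr wt : ℝ → ℝ → ℝ)
    (m M Dm μ : ℝ)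
    -- D is C² in r for each t ≥ 0, with jointly continuous derivatives
    (hDr : ∀ t ∈ Ici (0:ℝ), ∀ r ∈ Icc (0:ℝ) 1,
      HasDerivWithinAt (fun x => D x t) (Dr r t) (Icc (0:ℝ) 1) r)
    (hDrr : ∀ t ∈ Ici (0:ℝ), ∀ r ∈ Icc (0:ℝ) 1,
      HasDerivWithinAt (fun x => Dr x t) (Drr r t) (Icc (0:ℝ) 1) r)
    (hDrrcont : ContinuousOn (fun p : ℝ × ℝ => Drr p.1 p.2) (Icc 0 1 ×ˢ Ici 0))
    -- bounds on the coefficients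
    (hm : 0 < m)
    (hDlow : ∀ r ∈ Icc (0:ℝ) 1, ∀ t ∈ Ici (0:ℝ), m ≤ D r t)
    (hDrrbound : ∀ r ∈ Icc (0:ℝ) 1, ∀ t ∈ Ici (0:ℝ), |Drr r t| ≤ M)
    (hDmbound : ∀ t ∈ Ici (0:ℝ), max 0 (-((D 1 t + Dr 1 t) / 2)) ≤ Dm)
    -- choice of μ
    (hμ : μ < -(M / 2 + Dm ^ 2 / m))
    -- w is a classical solution: derivatives in r
    (hwr : ∀ t ∈ Ici (0:ℝ), ∀ r ∈ Icc (0:ℝ) 1,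
      HasDerivWithinAt (fun x => w x t) (wr r t) (Icc (0:ℝ) 1) r)
    (hwrr : ∀ t ∈ Ici (0:ℝ), ∀ r ∈ Icc (0:ℝ) 1,
      HasDerivWithinAt (fun x => wr x t) (wrr r t) (Icc (0:ℝ) 1) r)
    -- derivative in t
    (hwt : ∀ r ∈ Icc (0:ℝ) 1, ∀ t ∈ Ici (0:ℝ),
      HasDerivWithinAt (fun τ => w r τ) (wt r t) (Ici (0:ℝ)) t)
    -- joint continuity of w, wr, wrr, wt
    (hwcont : ContinuousOn (fun p : ℝ × ℝ => w p.1 p.2) (Icc 0 1 ×ˢ Ici 0))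
    (hwrrcont : ContinuousOn (fun p : ℝ × ℝ => wrr p.1 p.2) (Icc 0 1 ×ˢ Ici 0))
    (hwtcont : ContinuousOn (fun p : ℝ × ℝ => wt p.1 p.2) (Icc 0 1 ×ˢ Ici 0))
    -- w satisfies the target system
    (hPDE : ∀ r ∈ Icc (0:ℝ) 1, ∀ t ∈ Ici (0:ℝ),
      wt r t = D r t * wrr r t + μ * w r t)
    (hBC0 : ∀ t ∈ Ici (0:ℝ), w 0 t = 0)
    (hBC1 : ∀ t ∈ Ici (0:ℝ), wr 1 t = -(1/2) * w 1 t) :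
    (∀ t ∈ Ici (0:ℝ),
      (∫ r in (0:ℝ)..1, (w r t) ^ 2) ≤
        Real.exp (2 * (μ + M / 2 + Dm ^ 2 / m) * t) * ∫ r in (0:ℝ)..1, (w r 0) ^ 2)
    ∧ 2 * (μ + M / 2 + Dm ^ 2 / m) < 0 := by
  refine ⟨fun T hT => ?_, by linarith⟩
  set V : ℝ → ℝ := fun t => ∫ r in (0:ℝ)..1, w r t ^ 2
  have hw2 : ContinuousOn (uncurry fun r t => w r t ^ 2) (Icc 0 1 ×ˢ Ici 0) := hwcont.pow 2
  have hwwt : ContinuousOn (uncurry fun r t => 2 * w r t * wt r t) (Icc 0 1 ×ˢ Ici 0) :=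
    (continuousOn_const.mul hwcont).mul hwtcont
  have hV_cont : ContinuousOn V (Icc 0 T) :=
    continuousOn_parametric_intervalIntegral_of_continuousOn zero_le_one isCompact_Icc
      (hw2.mono (prod_mono_right Icc_subset_Ici_self))
  have hV_deriv : ∀ t ∈ Ioo 0 T, HasDerivAt V (∫ r in (0:ℝ)..1, 2 * w r t * wt r t) t := by
    intro t ht
    have hpos : ∀ τ ∈ Icc (t / 2) T, 0 < τ := fun τ hτ => by linarith [hτ.1, ht.1]
    have hs : Icc (t / 2) T ⊆ Ici 0 := fun τ hτ => (hpos τ hτ).le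
    refine hasDerivAt_parametric_intervalIntegral_of_continuousOn zero_le_one
      (Icc_mem_nhds (by linarith [ht.1]) ht.2) isCompact_Icc (hw2.mono (prod_mono_right hs))
      (hwwt.mono (prod_mono_right hs)) fun r hr τ hτ => ?_
    simpa using ((hwt r hr τ (hs hτ)).hasDerivAt (Ici_mem_nhds (hpos τ hτ))).fun_pow 2
  have hV_le : ∀ t ∈ Ioo 0 T,
      ∫ r in (0:ℝ)..1, 2 * w r t * wt r t ≤ 2 * (μ + M / 2 + Dm ^ 2 / m) * V t := by
    intro t ht
    have ht0 : t ∈ Ici (0:ℝ) := le_of_lt ht.1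
    rw [integral_congr fun r hr => by rw [hPDE r (by rwa [uIcc_of_le zero_le_one] at hr) t ht0]]
    convert integral_mul_diffusion_le hm (hDr t ht0) (hDrr t ht0) (hwr t ht0) (hwrr t ht0)
      (hDrrcont.uncurry_right t ht0) (hwrrcont.uncurry_right t ht0)
      (fun r hr => hDlow r hr t ht0) (fun r hr => (abs_le.1 (hDrrbound r hr t ht0)).2)
      ((le_max_right _ _).trans (hDmbound t ht0)) (hBC0 t ht0) (hBC1 t ht0) using 1
    ring
  simpa using le_exp_mul_of_hasDerivAt_le_mul hT hV_cont hV_deriv hV_le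

/-- Lyapunov exponential decay estimate for the target system
`∂w/∂t = D ∂²w/∂r² + μ w`, `w(0,t) = 0`, `∂w/∂r(1,t) = -(1/2) w(1,t)`. -/
theorem target_system_L2_exponential_stability
    (D Dr Drr : ℝ → ℝ → ℝ)
    (w wr wrr wt : ℝ → ℝ → ℝ)
    (m M Dm μ : ℝ)
    -- D is C² in r for each t ≥ 0, with jointly continuous derivatives
    (hDr : ∀ t ∈ Ici (0:ℝ), ∀ r ∈ Icc (0:ℝ) 1,
      HasDerivWithinAt (fun x => D x t) (Dr r t) (Icc (0:ℝ) 1) r)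
    (hDrr : ∀ t ∈ Ici (0:ℝ), ∀ r ∈ Icc (0:ℝ) 1,
      HasDerivWithinAt (fun x => Dr x t) (Drr r t) (Icc (0:ℝ) 1) r)
    (hDcont : ContinuousOn (fun p : ℝ × ℝ => D p.1 p.2) (Icc 0 1 ×ˢ Ici 0))
    (hDrcont : ContinuousOn (fun p : ℝ × ℝ => Dr p.1 p.2) (Icc 0 1 ×ˢ Ici 0))
    (hDrrcont : ContinuousOn (fun p : ℝ × ℝ => Drr p.1 p.2) (Icc 0 1 ×ˢ Ici 0))
    -- bounds on the coefficients
    (hm : 0 < m) (hM : 0 ≤ M) (hDm : 0 ≤ Dm)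
    (hDlow : ∀ r ∈ Icc (0:ℝ) 1, ∀ t ∈ Ici (0:ℝ), m ≤ D r t)
    (hDrrbound : ∀ r ∈ Icc (0:ℝ) 1, ∀ t ∈ Ici (0:ℝ), |Drr r t| ≤ M)
    (hDmbound : ∀ t ∈ Ici (0:ℝ), max 0 (-((D 1 t + Dr 1 t) / 2)) ≤ Dm)
    -- choice of μ
    (hμ : μ < -(M / 2 + Dm ^ 2 / m))
    -- w is a classical solution: derivatives in r
    (hwr : ∀ t ∈ Ici (0:ℝ), ∀ r ∈ Icc (0:ℝ) 1,
      HasDerivWithinAt (fun x => w x t) (wr r t) (Icc (0:ℝ) 1) r)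
    (hwrr : ∀ t ∈ Ici (0:ℝ), ∀ r ∈ Icc (0:ℝ) 1,
      HasDerivWithinAt (fun x => wr x t) (wrr r t) (Icc (0:ℝ) 1) r)
    -- derivative in t
    (hwt : ∀ r ∈ Icc (0:ℝ) 1, ∀ t ∈ Ici (0:ℝ),
      HasDerivWithinAt (fun τ => w r τ) (wt r t) (Ici (0:ℝ)) t)
    -- joint continuity of w, wr, wrr, wt
    (hwcont : ContinuousOn (fun p : ℝ × ℝ => w p.1 p.2) (Icc 0 1 ×ˢ Ici 0))
    (hwrcont : ContinuousOn (fun p : ℝ × ℝ => wr p.1 p.2) (Icc 0 1 ×ˢ Ici 0))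
    (hwrrcont : ContinuousOn (fun p : ℝ × ℝ => wrr p.1 p.2) (Icc 0 1 ×ˢ Ici 0))
    (hwtcont : ContinuousOn (fun p : ℝ × ℝ => wt p.1 p.2) (Icc 0 1 ×ˢ Ici 0))
    -- w satisfies the target system
    (hPDE : ∀ r ∈ Icc (0:ℝ) 1, ∀ t ∈ Ici (0:ℝ),
      wt r t = D r t * wrr r t + μ * w r t)
    (hBC0 : ∀ t ∈ Ici (0:ℝ), w 0 t = 0)
    (hBC1 : ∀ t ∈ Ici (0:ℝ), wr 1 t = -(1/2) * w 1 t) :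
    (∀ t ∈ Ici (0:ℝ),
      (∫ r in (0:ℝ)..1, (w r t) ^ 2) ≤
        Real.exp (2 * (μ + M / 2 + Dm ^ 2 / m) * t) * ∫ r in (0:ℝ)..1, (w r 0) ^ 2)
    ∧ 2 * (μ + M / 2 + Dm ^ 2 / m) < 0 :=
  target_system_L2_exponential_stability_general D Dr Drr w wr wrr wt m M Dm μ hDr hDrr hDrrcont hm
    hDlow hDrrbound hDmbound hμ hwr hwrr hwt hwcont hwrrcont hwtcont hPDE hBC0 hBC1
end

section
/- Let D : [0,1] × [0,∞) → ℝ be such that for each t the map r ↦ D(r,t) is twice continuously differentiable, and let w be a classical solution of the target system such that w, ∂w/∂r, ∂²w/∂r², ∂w/∂t are jointly continuous on [0,1]×[0,∞). Define the Lyapunov function W(t) = (1/2)∫₀¹ w(r,t)² dr. Then for every t > 0, W is differentiable at t and W′(t) = −((D(1,t) + ∂D/∂r(1,t))/2) · w(1,t)² − ∫₀¹ D(r,t) (∂w/∂r(r,t))² dr + ∫₀¹ ((∂²D/∂r²(r,t))/2 + μ) w(r,t)² dr. -/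
open MeasureTheory intervalIntegral Set Real
open Metric
open scoped Interval

/-! Differentiating under the integral sign, `W' = ∫ w w_t = ∫ w (D w_rr + μ w)`. The flux
`Φ = D w w_r - D_r w² / 2` satisfies `Φ_r = w (D w_rr + μ w) + D w_r² - (D_rr / 2 + μ) w²`, so by
the fundamental theorem of calculus `W' = Φ(1) - Φ(0) - ∫ D w_r² + ∫ (D_rr / 2 + μ) w²`, and the
boundary conditions give `Φ(0) = 0` and `Φ(1) = -(D(1) + D_r(1)) w(1)² / 2`. -/

theorem integral_mul_diffusion_eq_of_hasDerivWithinAt {D D' D'' g g' g'' : ℝ → ℝ} {a b : ℝ}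
    (μ : ℝ)
    (hD : ∀ x ∈ [[a, b]], HasDerivWithinAt D (D' x) [[a, b]] x)
    (hD' : ∀ x ∈ [[a, b]], HasDerivWithinAt D' (D'' x) [[a, b]] x)
    (hg : ∀ x ∈ [[a, b]], HasDerivWithinAt g (g' x) [[a, b]] x)
    (hg' : ∀ x ∈ [[a, b]], HasDerivWithinAt g' (g'' x) [[a, b]] x)
    (hD''c : ContinuousOn D'' [[a, b]]) (hg''c : ContinuousOn g'' [[a, b]]) :
    ∫ x in a..b, g x * (D x * g'' x + μ * g x) =
      (D b * g b * g' b - D' b * g b ^ 2 / 2) - (D a * g a * g' a - D' a * g a ^ 2 / 2)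
        - (∫ x in a..b, D x * g' x ^ 2) + ∫ x in a..b, (D'' x / 2 + μ) * g x ^ 2 := by
  have cD : ContinuousOn D [[a, b]] := fun x hx => (hD x hx).continuousWithinAt
  have cD' : ContinuousOn D' [[a, b]] := fun x hx => (hD' x hx).continuousWithinAt
  have cg : ContinuousOn g [[a, b]] := fun x hx => (hg x hx).continuousWithinAt
  have cg' : ContinuousOn g' [[a, b]] := fun x hx => (hg' x hx).continuousWithinAt
  have hflux : ∀ x ∈ [[a, b]], HasDerivWithinAt (fun x => D x * g x * g' x - D' x * g x ^ 2 / 2)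
      (g x * (D x * g'' x + μ * g x) + D x * g' x ^ 2 - (D'' x / 2 + μ) * g x ^ 2) [[a, b]] x := by
    intro x hx
    refine (((hD x hx).fun_mul (hg x hx)).fun_mul (hg' x hx) |>.fun_sub
      (((hD' x hx).fun_mul ((hg x hx).fun_pow 2)).div_const 2)).congr_deriv ?_
    push_cast
    ring
  have iA : IntervalIntegrable (fun x => g x * (D x * g'' x + μ * g x)) volume a b :=
    (cg.mul ((cD.mul hg''c).add (continuousOn_const.mul cg))).intervalIntegrable
  have iB : IntervalIntegrable (fun x => D x * g' x ^ 2) volume a b :=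
    (cD.mul (cg'.pow 2)).intervalIntegrable
  have iC : IntervalIntegrable (fun x => (D'' x / 2 + μ) * g x ^ 2) volume a b :=
    (((hD''c.div_const 2).add continuousOn_const).mul (cg.pow 2)).intervalIntegrable
  have hFTC := integral_eq_sub_of_hasDeriv_right
    (f := fun x => D x * g x * g' x - D' x * g x ^ 2 / 2)
    ((cD.mul cg).mul cg' |>.sub ((cD'.mul (cg.pow 2)).div_const 2))
    (fun x hx => (hflux x (mem_Icc_of_Ioo hx)).hasDerivAt (Icc_mem_nhds hx.1 hx.2)
      |>.hasDerivWithinAt) ((iA.add iB).sub iC)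
  rw [intervalIntegral.integral_sub (iA.add iB) iC, intervalIntegral.integral_add iA iB] at hFTC
  linarith

theorem hasDerivAt_intervalIntegral_of_continuousOn_deriv {F F' : ℝ → ℝ → ℝ} {a b t₀ ε : ℝ}
    (hε : 0 < ε) (hF : ∀ t ∈ ball t₀ ε, ContinuousOn (F · t) [[a, b]])
    (hF' : ContinuousOn (fun p : ℝ × ℝ => F' p.1 p.2) ([[a, b]] ×ˢ closedBall t₀ ε))
    (hderiv : ∀ x ∈ [[a, b]], ∀ t ∈ ball t₀ ε, HasDerivAt (F x ·) (F' x t) t) :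
    HasDerivAt (fun t => ∫ x in a..b, F x t) (∫ x in a..b, F' x t₀) t₀ := by
  obtain ⟨C, hC⟩ :=
    (isCompact_uIcc.prod (isCompact_closedBall t₀ ε)).exists_bound_of_continuousOn hF'
  refine (hasDerivAt_integral_of_dominated_loc_of_deriv_le (μ := volume)
    (F := fun t x => F x t) (F' := fun t x => F' x t) (bound := fun _ => C)
    (ball_mem_nhds t₀ hε) ?_ (hF t₀ (mem_ball_self hε)).intervalIntegrable ?_ ?_
    intervalIntegrable_const ?_).2
  · filter_upwards [ball_mem_nhds t₀ hε] with t ht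
    exact ((hF t ht).mono uIoc_subset_uIcc).aestronglyMeasurable measurableSet_uIoc
  · exact ((ContinuousOn.uncurry_right (f := F') t₀ (mem_closedBall_self hε.le) hF').mono
      uIoc_subset_uIcc).aestronglyMeasurable measurableSet_uIoc
  · exact ae_of_all _ fun x hx t ht =>
      hC (x, t) ⟨uIoc_subset_uIcc hx, ball_subset_closedBall ht⟩
  · exact ae_of_all _ fun x hx t ht => hderiv x (uIoc_subset_uIcc hx) t ht

theorem lyapunov_derivative_target_system_general
    (D Dr Drr : ℝ → ℝ → ℝ)
    (w wr wrr wt : ℝ → ℝ → ℝ)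
    (μ : ℝ)
    -- D is C² in r for each t
    (hDr : ∀ t ∈ Ici (0:ℝ), ∀ r ∈ Icc (0:ℝ) 1,
      HasDerivWithinAt (fun x => D x t) (Dr r t) (Icc (0:ℝ) 1) r)
    (hDrr : ∀ t ∈ Ici (0:ℝ), ∀ r ∈ Icc (0:ℝ) 1,
      HasDerivWithinAt (fun x => Dr x t) (Drr r t) (Icc (0:ℝ) 1) r)
    (hDrrcont : ∀ t ∈ Ici (0:ℝ), ContinuousOn (fun x => Drr x t) (Icc 0 1))
    -- w is a classical solution: derivatives in r
    (hwr : ∀ t ∈ Ici (0:ℝ), ∀ r ∈ Icc (0:ℝ) 1,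
      HasDerivWithinAt (fun x => w x t) (wr r t) (Icc (0:ℝ) 1) r)
    (hwrr : ∀ t ∈ Ici (0:ℝ), ∀ r ∈ Icc (0:ℝ) 1,
      HasDerivWithinAt (fun x => wr x t) (wrr r t) (Icc (0:ℝ) 1) r)
    -- derivative in t
    (hwt : ∀ r ∈ Icc (0:ℝ) 1, ∀ t ∈ Ici (0:ℝ),
      HasDerivWithinAt (fun τ => w r τ) (wt r t) (Ici (0:ℝ)) t)
    -- joint continuity of w, wr, wrr, wt on [0,1] × [0,∞)
    (hwcont : ContinuousOn (fun p : ℝ × ℝ => w p.1 p.2) (Icc 0 1 ×ˢ Ici 0))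
    (hwrrcont : ContinuousOn (fun p : ℝ × ℝ => wrr p.1 p.2) (Icc 0 1 ×ˢ Ici 0))
    (hwtcont : ContinuousOn (fun p : ℝ × ℝ => wt p.1 p.2) (Icc 0 1 ×ˢ Ici 0))
    -- w satisfies the target system
    (hPDE : ∀ r ∈ Icc (0:ℝ) 1, ∀ t ∈ Ici (0:ℝ),
      wt r t = D r t * wrr r t + μ * w r t)
    (hBC0 : ∀ t ∈ Ici (0:ℝ), w 0 t = 0)
    (hBC1 : ∀ t ∈ Ici (0:ℝ), wr 1 t = -(1/2) * w 1 t)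
    -- the Lyapunov function
    (W : ℝ → ℝ)
    (hW : ∀ t ∈ Ici (0:ℝ), W t = (1/2) * ∫ r in (0:ℝ)..1, (w r t) ^ 2) :
    ∀ t, 0 < t →
      HasDerivAt W
        (-((D 1 t + Dr 1 t) / 2) * (w 1 t) ^ 2
          - (∫ r in (0:ℝ)..1, D r t * (wr r t) ^ 2)
          + ∫ r in (0:ℝ)..1, (Drr r t / 2 + μ) * (w r t) ^ 2) t := by
  intro t ht
  have ht0 : t ∈ Ici (0:ℝ) := ht.le
  rw [← uIcc_of_le zero_le_one] at hDr hDrr hDrrcont hwr hwrr hwt hwcont hwrrcont hwtcont hPDE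
  have hnear : ∀ τ ∈ closedBall t (t / 2), 0 < τ := fun τ hτ => by
    rw [mem_closedBall, Real.dist_eq, abs_le] at hτ
    linarith
  have hLeibniz : HasDerivAt (fun τ => ∫ r in (0:ℝ)..1, w r τ ^ 2)
      (∫ r in (0:ℝ)..1, 2 * w r t * wt r t) t :=
    hasDerivAt_intervalIntegral_of_continuousOn_deriv (half_pos ht)
      (fun τ hτ => (hwcont.uncurry_right (f := w) τ
        (hnear τ (ball_subset_closedBall hτ)).le).pow 2)
      (((continuousOn_const.mul hwcont).mul hwtcont).mono
        (prod_mono subset_rfl fun τ hτ => (hnear τ hτ).le))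
      (fun r hr τ hτ => by
        have hτ0 := hnear τ (ball_subset_closedBall hτ)
        simpa using ((hwt r hr τ hτ0.le).hasDerivAt (Ici_mem_nhds hτ0)).fun_pow 2)
  have hPDEint : ∫ r in (0:ℝ)..1, 2 * w r t * wt r t
      = 2 * ∫ r in (0:ℝ)..1, w r t * (D r t * wrr r t + μ * w r t) := by
    rw [← intervalIntegral.integral_const_mul]
    exact integral_congr fun r hr => by simp only [hPDE r hr t ht0]; ring
  have henergy := integral_mul_diffusion_eq_of_hasDerivWithinAt μ (hDr t ht0) (hDrr t ht0)
    (hwr t ht0) (hwrr t ht0) (hDrrcont t ht0) (hwrrcont.uncurry_right (f := wrr) t ht0)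
  refine ((hLeibniz.const_mul (1 / 2)).congr_of_eventuallyEq ?_).congr_deriv ?_
  · filter_upwards [Ioi_mem_nhds ht] with τ (hτ : 0 < τ) using hW τ hτ.le
  · rw [hPDEint, henergy, hBC0 t ht0, hBC1 t ht0]
    ring

/-- derivative of the Lyapunov function `W(t) = (1/2)∫₀¹ w(r,t)² dr`
along classical solutions of the target system
`∂w/∂t = D ∂²w/∂r² + μ w`, `w(0,t) = 0`, `∂w/∂r(1,t) = -(1/2) w(1,t)`. -/
theorem lyapunov_derivative_target_system
    (D Dr Drr : ℝ → ℝ → ℝ)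
    (w wr wrr wt : ℝ → ℝ → ℝ)
    (μ : ℝ)
    -- D is C² in r for each t
    (hDr : ∀ t ∈ Ici (0:ℝ), ∀ r ∈ Icc (0:ℝ) 1,
      HasDerivWithinAt (fun x => D x t) (Dr r t) (Icc (0:ℝ) 1) r)
    (hDrr : ∀ t ∈ Ici (0:ℝ), ∀ r ∈ Icc (0:ℝ) 1,
      HasDerivWithinAt (fun x => Dr x t) (Drr r t) (Icc (0:ℝ) 1) r)
    (hDrrcont : ∀ t ∈ Ici (0:ℝ), ContinuousOn (fun x => Drr x t) (Icc 0 1))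
    -- w is a classical solution: derivatives in r
    (hwr : ∀ t ∈ Ici (0:ℝ), ∀ r ∈ Icc (0:ℝ) 1,
      HasDerivWithinAt (fun x => w x t) (wr r t) (Icc (0:ℝ) 1) r)
    (hwrr : ∀ t ∈ Ici (0:ℝ), ∀ r ∈ Icc (0:ℝ) 1,
      HasDerivWithinAt (fun x => wr x t) (wrr r t) (Icc (0:ℝ) 1) r)
    -- derivative in t
    (hwt : ∀ r ∈ Icc (0:ℝ) 1, ∀ t ∈ Ici (0:ℝ),
      HasDerivWithinAt (fun τ => w r τ) (wt r t) (Ici (0:ℝ)) t)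
    -- joint continuity of w, wr, wrr, wt on [0,1] × [0,∞)
    (hwcont : ContinuousOn (fun p : ℝ × ℝ => w p.1 p.2) (Icc 0 1 ×ˢ Ici 0))
    (hwrcont : ContinuousOn (fun p : ℝ × ℝ => wr p.1 p.2) (Icc 0 1 ×ˢ Ici 0))
    (hwrrcont : ContinuousOn (fun p : ℝ × ℝ => wrr p.1 p.2) (Icc 0 1 ×ˢ Ici 0))
    (hwtcont : ContinuousOn (fun p : ℝ × ℝ => wt p.1 p.2) (Icc 0 1 ×ˢ Ici 0))
    -- w satisfies the target system
    (hPDE : ∀ r ∈ Icc (0:ℝ) 1, ∀ t ∈ Ici (0:ℝ),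
      wt r t = D r t * wrr r t + μ * w r t)
    (hBC0 : ∀ t ∈ Ici (0:ℝ), w 0 t = 0)
    (hBC1 : ∀ t ∈ Ici (0:ℝ), wr 1 t = -(1/2) * w 1 t)
    -- the Lyapunov function
    (W : ℝ → ℝ)
    (hW : ∀ t ∈ Ici (0:ℝ), W t = (1/2) * ∫ r in (0:ℝ)..1, (w r t) ^ 2) :
    ∀ t, 0 < t →
      HasDerivAt W
        (-((D 1 t + Dr 1 t) / 2) * (w 1 t) ^ 2
          - (∫ r in (0:ℝ)..1, D r t * (wr r t) ^ 2)
          + ∫ r in (0:ℝ)..1, (Drr r t / 2 + μ) * (w r t) ^ 2) t :=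
  lyapunov_derivative_target_system_general D Dr Drr w wr wrr wt μ hDr hDrr hDrrcont hwr hwrr hwt
    hwcont hwrrcont hwtcont hPDE hBC0 hBC1 W hW
end
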